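/- arXiv:1609.08522 — 5 statements merged into one kernel-verified Lean document; each statement's English description precedes it below -/
import Mathlib

section
/- Let X ∈ ℂ^n, and suppose the pair (u, s) with u ∈ ℂ^n, s ∈ ℝ attains the infimum in the SDP characterization of ‖X‖_A², i.e., the block matrix [[Toep(u), X],[Xᴴ, s]] is positive semidefinite and (1/n)·s·Tr(Toep(u)) = ‖X‖_A². Suppose Toep(u) admits the Vandermonde decomposition Toep(u) = V D Vᴴ, where V = [a(t_1,0), ..., a(t_r,0)] for distinct t_1,...,t_r ∈ [0,1) and D is a diagonal matrix with positive diagonal entries. Then there exists a vector c ∈ ℂ^r such that X = Vc and Σ_{j=1}^r |c_j| = ‖X‖_A. -/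
open Matrix Complex ComplexConjugate BigOperators
open scoped ComplexOrder

/-- The atom `a(t,φ) ∈ ℂ^n` with `f`-th entry `e^{−i(2πft−φ)}`. -/
noncomputable def atom (n : ℕ) (t φ : ℝ) : Fin n → ℂ :=
  fun f => Complex.exp (-Complex.I * ((2 * Real.pi * (f : ℕ) * t : ℝ) - (φ : ℝ)))

/-- The atomic norm of `X ∈ ℂ^n`. -/
noncomputable def atomicNorm {n : ℕ} (X : Fin n → ℂ) : ℝ :=
  sInf { v : ℝ | ∃ (k : ℕ) (c : Fin k → ℂ) (t φ : Fin k → ℝ),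
    (∀ j, t j ∈ Set.Ico (0 : ℝ) 1) ∧ (∀ j, φ j ∈ Set.Ico (0 : ℝ) (2 * Real.pi)) ∧
    X = ∑ j, ((‖c j‖ : ℝ) : ℂ) • atom n (t j) (φ j) ∧
    v = ∑ j, ‖c j‖ }

/-- The Hermitian Toeplitz matrix whose first column is `u`. -/
def toep (n : ℕ) (u : Fin n → ℂ) : Matrix (Fin n) (Fin n) ℂ :=
  Matrix.of fun j k =>
    if (k : ℕ) ≤ (j : ℕ) then
      u ⟨(j : ℕ) - (k : ℕ), lt_of_le_of_lt (Nat.sub_le _ _) j.isLt⟩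
    else
      star (u ⟨(k : ℕ) - (j : ℕ), lt_of_le_of_lt (Nat.sub_le _ _) k.isLt⟩)

/-- The `(n+1)×(n+1)` block matrix `[[T, X],[Xᴴ, s]]`. -/
noncomputable def blockMat {n : ℕ} (T : Matrix (Fin n) (Fin n) ℂ) (X : Fin n → ℂ) (s : ℝ) :
    Matrix (Fin n ⊕ Unit) (Fin n ⊕ Unit) ℂ :=
  Matrix.fromBlocks T (Matrix.replicateCol Unit X) (Matrix.replicateRow Unit (star X))
    (Matrix.of fun _ _ => (s : ℂ))

/-! Positive semidefiniteness of `[[T, X], [Xᴴ, s]]` forces `X ⊥ ker T`, hence `X = T z` for some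
`z`, and testing the block on `(z, -1)` gives `zᴴ T z ≤ s`. With `T = V D Vᴴ` and `c = D Vᴴ z` we get
`X = V c`, and Cauchy–Schwarz gives `(∑ |c_j|)² ≤ (∑ d_j) · zᴴ T z ≤ (Tr T / n) · s = ‖X‖_A²`, since
the atoms have entries of modulus one. Conversely `X = V c` is itself an atomic decomposition, so
`‖X‖_A ≤ ∑ |c_j|`. -/

theorem Matrix.IsHermitian.exists_mulVec_eq_of_forall_mulVec_eq_zero
    {m 𝕜 : Type*} [Fintype m] [DecidableEq m] [RCLike 𝕜] {A : Matrix m m 𝕜} (hA : A.IsHermitian)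
    {x : m → 𝕜} (hx : ∀ v, A *ᵥ v = 0 → star v ⬝ᵥ x = 0) : ∃ z, A *ᵥ z = x := by
  have hsymm := isSymmetric_toEuclideanLin_iff.mpr hA
  have hmem : WithLp.toLp 2 x ∈ LinearMap.range A.toEuclideanLin := by
    rw [← Submodule.orthogonal_orthogonal (LinearMap.range _), hsymm.orthogonal_range]
    intro v hv
    rw [EuclideanSpace.inner_eq_star_dotProduct, dotProduct_comm]
    exact hx _ (congrArg WithLp.ofLp hv)
  obtain ⟨z, hz⟩ := hmem
  exact ⟨z, congrArg WithLp.ofLp hz⟩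

lemma re_star_dotProduct_blockMat_mulVec {n : ℕ} (T : Matrix (Fin n) (Fin n) ℂ) (X : Fin n → ℂ)
    (s : ℝ) (v : Fin n → ℂ) (w : ℂ) :
    (star (Sum.elim v fun _ : Unit => w) ⬝ᵥ blockMat T X s *ᵥ Sum.elim v fun _ => w).re
      = (star v ⬝ᵥ T *ᵥ v).re + 2 * ((star v ⬝ᵥ X) * w).re + s * normSq w := by
  simp only [blockMat, fromBlocks_mulVec, Function.star_sumElim, sumElim_dotProduct_sumElim]
  have hXw : star v ⬝ᵥ (replicateCol Unit X *ᵥ fun _ => w) = (star v ⬝ᵥ X) * w := by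
    simp [dotProduct, mulVec, Finset.sum_mul, mul_assoc]
  have hwX : (star fun _ : Unit => w) ⬝ᵥ (replicateRow Unit (star X) *ᵥ v)
      = conj ((star v ⬝ᵥ X) * w) := by
    simp [dotProduct, mulVec, Finset.mul_sum, mul_comm, mul_left_comm]
  have hww : (star fun _ : Unit => w) ⬝ᵥ ((of fun _ _ => (s : ℂ)) *ᵥ fun _ : Unit => w)
      = s * normSq w := by
    simp only [dotProduct, Finset.univ_unique, PUnit.default_eq_unit, Pi.star_apply,
      RCLike.star_def, mulVec, of_apply, Finset.sum_const, Finset.card_singleton, one_smul,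
      normSq_eq_conj_mul_self]
    ring
  simp only [Sum.elim_comp_inl, Sum.elim_comp_inr, dotProduct_add, hXw, hwX, hww, add_re, conj_re,
    re_ofReal_mul, ofReal_re]
  ring

section blockMat

variable {n : ℕ} {T : Matrix (Fin n) (Fin n) ℂ} {X : Fin n → ℂ} {s : ℝ}

lemma blockMat_quadForm_nonneg (h : (blockMat T X s).PosSemidef) (v : Fin n → ℂ) (w : ℂ) :
    0 ≤ (star v ⬝ᵥ T *ᵥ v).re + 2 * ((star v ⬝ᵥ X) * w).re + s * normSq w :=
  re_star_dotProduct_blockMat_mulVec T X s v w ▸ h.re_dotProduct_nonneg _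

lemma star_dotProduct_eq_zero_of_mulVec_eq_zero (h : (blockMat T X s).PosSemidef)
    {v : Fin n → ℂ} (hv : T *ᵥ v = 0) : star v ⬝ᵥ X = 0 := by
  set α := star v ⬝ᵥ X
  -- the block tested on `(v, -x · conj α)` is a quadratic in `x` without constant term
  have hquad : ∀ x : ℝ, 0 ≤ (s * normSq α) * (x * x) + (-2 * normSq α) * x + 0 := by
    intro x
    have hα : (α * (-(x : ℂ) * conj α)).re = -x * normSq α := by
      rw [mul_left_comm, mul_conj, ← ofReal_neg, ← ofReal_mul, ofReal_re]
    have := blockMat_quadForm_nonneg h v (-(x : ℂ) * conj α)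
    rw [hv, dotProduct_zero, zero_re, hα, normSq_mul, normSq_neg, normSq_ofReal, normSq_conj]
      at this
    linarith
  have hdiscrim := discrim_le_zero hquad
  rw [discrim] at hdiscrim
  exact normSq_eq_zero.mp (pow_eq_zero_iff two_ne_zero |>.mp (by nlinarith [sq_nonneg (normSq α)]))

lemma exists_mulVec_eq_of_posSemidef_blockMat (h : (blockMat T X s).PosSemidef) :
    ∃ z, T *ᵥ z = X :=
  (isHermitian_fromBlocks_iff.mp h.1).1.exists_mulVec_eq_of_forall_mulVec_eq_zero
    fun _ hv => star_dotProduct_eq_zero_of_mulVec_eq_zero h hv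

lemma re_star_dotProduct_mulVec_le (h : (blockMat T X s).PosSemidef) {z : Fin n → ℂ}
    (hz : T *ᵥ z = X) : (star z ⬝ᵥ T *ᵥ z).re ≤ s := by
  have := blockMat_quadForm_nonneg h z (-1)
  rw [hz] at this ⊢
  simp only [mul_neg, mul_one, neg_re, normSq_neg, normSq_one] at this
  linarith

end blockMat

section diagonalFactorization

variable {m ι : Type*} [Fintype m] [Fintype ι] [DecidableEq ι]

lemma star_dotProduct_mul_diagonal_mul_conjTranspose_mulVec (V : Matrix m ι ℂ) (d : ι → ℝ)
    (v : m → ℂ) :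
    star v ⬝ᵥ (V * diagonal (fun j => (d j : ℂ)) * Vᴴ) *ᵥ v
      = ((∑ j, d j * normSq ((Vᴴ *ᵥ v) j) : ℝ) : ℂ) := by
  rw [← mulVec_mulVec, ← mulVec_mulVec, dotProduct_mulVec, ← conjTranspose_conjTranspose V,
    ← star_mulVec, conjTranspose_conjTranspose]
  push_cast
  simp only [dotProduct, Pi.star_apply, mulVec_diagonal, star_def, normSq_eq_conj_mul_self]
  exact Finset.sum_congr rfl fun j _ => by ring

lemma trace_mul_diagonal_mul_conjTranspose {V : Matrix m ι ℂ} (hV : ∀ i j, ‖V i j‖ = 1)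
    (d : ι → ℂ) : (V * diagonal d * Vᴴ).trace = Fintype.card m * ∑ j, d j := by
  rw [trace_mul_comm, ← Matrix.mul_assoc, trace, Finset.mul_sum]
  refine Finset.sum_congr rfl fun j _ => ?_
  have hcol : ∀ i, star (V i j) * V i j = 1 := fun i => by
    rw [star_def, ← normSq_eq_conj_mul_self, normSq_eq_norm_sq, hV, one_pow, ofReal_one]
  rw [diag_apply, mul_diagonal, Matrix.mul_apply]
  simp only [conjTranspose_apply, hcol, Finset.sum_const, Finset.card_univ, nsmul_eq_mul, mul_one]

end diagonalFactorization

lemma sq_sum_norm_le_of_posSemidef_blockMat {n r : ℕ} {X : Fin n → ℂ} {s : ℝ}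
    {V : Matrix (Fin n) (Fin r) ℂ} {d : Fin r → ℝ} (hd : ∀ j, 0 ≤ d j)
    (h : (blockMat (V * diagonal (fun j => (d j : ℂ)) * Vᴴ) X s).PosSemidef) {z : Fin n → ℂ}
    (hz : (V * diagonal (fun j => (d j : ℂ)) * Vᴴ) *ᵥ z = X) :
    (∑ j, ‖(d j : ℂ) * (Vᴴ *ᵥ z) j‖) ^ 2 ≤ (∑ j, d j) * s := by
  set g := Vᴴ *ᵥ z
  have hquad := re_star_dotProduct_mulVec_le h hz
  rw [star_dotProduct_mul_diagonal_mul_conjTranspose_mulVec, ofReal_re] at hquad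
  calc (∑ j, ‖(d j : ℂ) * g j‖) ^ 2 = (∑ j, d j * ‖g j‖) ^ 2 := by
        simp only [norm_mul, norm_real, Real.norm_of_nonneg (hd _)]
    _ ≤ (∑ j, d j) * ∑ j, d j * normSq (g j) :=
        Finset.sum_sq_le_sum_mul_sum_of_sq_le_mul _ (fun j _ => hd j)
          (fun j _ => mul_nonneg (hd j) (normSq_nonneg _))
          (fun j _ => by rw [normSq_eq_norm_sq]; nlinarith)
    _ ≤ (∑ j, d j) * s := by gcongr; exact Finset.sum_nonneg fun j _ => hd j

lemma norm_atom (n : ℕ) (t φ : ℝ) (f : Fin n) : ‖atom n t φ f‖ = 1 := by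
  rw [atom, norm_exp]
  simp [mul_re]

lemma atom_eq_exp_smul_atom_zero (n : ℕ) (t φ : ℝ) :
    atom n t φ = exp (φ * I) • atom n t 0 := by
  ext f
  simp only [atom, Pi.smul_apply, smul_eq_mul, ← exp_add]
  congr 1
  push_cast
  ring

lemma exists_mem_Ico_norm_mul_exp_eq (c : ℂ) :
    ∃ φ ∈ Set.Ico 0 (2 * Real.pi), (‖c‖ : ℂ) * exp (φ * I) = c := by
  refine ⟨toIcoMod Real.two_pi_pos 0 c.arg, toIcoMod_mem_Ico' _ _, ?_⟩
  have hshift : ((toIcoMod Real.two_pi_pos 0 c.arg : ℝ) : ℂ) * I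
      = c.arg * I - ((toIcoDiv Real.two_pi_pos 0 c.arg : ℤ) : ℂ) * (2 * Real.pi * I) := by
    rw [← self_sub_toIcoDiv_zsmul]
    push_cast
    ring
  rw [hshift, exp_sub, exp_int_mul_two_pi_mul_I, div_one, norm_mul_exp_arg_mul_I]

lemma atomicNorm_nonneg {n : ℕ} (X : Fin n → ℂ) : 0 ≤ atomicNorm X :=
  Real.sInf_nonneg <| by rintro _ ⟨k, c, t, φ, -, -, -, rfl⟩; positivity

lemma atomicNorm_mulVec_le {n r : ℕ} {t : Fin r → ℝ} (ht : ∀ j, t j ∈ Set.Ico (0 : ℝ) 1)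
    {V : Matrix (Fin n) (Fin r) ℂ} (hV : ∀ f l, V f l = atom n (t l) 0 f) (c : Fin r → ℂ) :
    atomicNorm (V *ᵥ c) ≤ ∑ j, ‖c j‖ := by
  choose φ hφ hc using fun j => exists_mem_Ico_norm_mul_exp_eq (c j)
  refine csInf_le ⟨0, ?_⟩ ⟨r, c, t, φ, ht, hφ, ?_, rfl⟩
  · rintro _ ⟨k, c, t, φ, -, -, -, rfl⟩
    positivity
  · ext f
    simp only [mulVec, dotProduct, Finset.sum_apply, Pi.smul_apply, smul_eq_mul, hV]
    refine Finset.sum_congr rfl fun j _ => ?_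
    rw [atom_eq_exp_smul_atom_zero n (t j) (φ j), Pi.smul_apply, smul_eq_mul]
    conv_lhs => rw [← hc j]
    ring

theorem atomicNorm_attained_of_vandermonde_general (n r : ℕ) (X u : Fin n → ℂ) (s : ℝ)
    (hpsd : (blockMat (toep n u) X s).PosSemidef)
    (hopt : (1 / (n : ℝ)) * s * ((toep n u).trace).re = (atomicNorm X) ^ 2)
    (t : Fin r → ℝ) (ht : ∀ j, t j ∈ Set.Ico (0 : ℝ) 1)
    (d : Fin r → ℝ) (hd : ∀ j, 0 < d j)
    (V : Matrix (Fin n) (Fin r) ℂ) (hV : ∀ f l, V f l = atom n (t l) 0 f)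
    (hdecomp : toep n u = V * Matrix.diagonal (fun j => (d j : ℂ)) * Vᴴ) :
    ∃ c : Fin r → ℂ, X = V.mulVec c ∧ ∑ j, ‖c j‖ = atomicNorm X := by
  obtain ⟨z, hz⟩ := exists_mulVec_eq_of_posSemidef_blockMat hpsd
  set c : Fin r → ℂ := fun j => (d j : ℂ) * (Vᴴ *ᵥ z) j
  have hXc : X = V *ᵥ c := by
    rw [← hz, hdecomp, ← mulVec_mulVec, ← mulVec_mulVec]
    congr 1
    ext j
    exact mulVec_diagonal _ _ _
  refine ⟨c, hXc, le_antisymm ?_ (hXc ▸ atomicNorm_mulVec_le ht hV c)⟩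
  -- for `n = 0`, `hopt` says nothing (`1 / 0 = 0`), but then `c = 0`
  rcases n.eq_zero_or_pos with rfl | hn
  · simp [c, Subsingleton.elim z 0, atomicNorm_nonneg]
  have htrace : (toep n u).trace.re = n * ∑ j, d j := by
    rw [hdecomp, trace_mul_diagonal_mul_conjTranspose fun i j => by rw [hV, norm_atom]]
    simp
  rw [hdecomp] at hpsd hz
  have hsq : (∑ j, ‖c j‖) ^ 2 ≤ atomicNorm X ^ 2 :=
    calc _ ≤ (∑ j, d j) * s := sq_sum_norm_le_of_posSemidef_blockMat (fun j => (hd j).le) hpsd hz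
      _ = atomicNorm X ^ 2 := by rw [← hopt, htrace]; field_simp
  exact (pow_le_pow_iff_left₀ (by positivity) (atomicNorm_nonneg X) two_ne_zero).mp hsq

/-- Proposition 1, second part: if `(u,s)` attains the infimum in the SDP characterization of
`‖X‖_A²` and `Toep(u)` has a Vandermonde decomposition `V D Vᴴ`, then `X = Vc` with
`Σ|c_j| = ‖X‖_A`. -/
theorem atomicNorm_attained_of_vandermonde (n r : ℕ) (X u : Fin n → ℂ) (s : ℝ)
    (hpsd : (blockMat (toep n u) X s).PosSemidef)
    (hopt : (1 / (n : ℝ)) * s * ((toep n u).trace).re = (atomicNorm X) ^ 2)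
    (t : Fin r → ℝ) (ht : ∀ j, t j ∈ Set.Ico (0 : ℝ) 1) (htinj : Function.Injective t)
    (d : Fin r → ℝ) (hd : ∀ j, 0 < d j)
    (V : Matrix (Fin n) (Fin r) ℂ) (hV : ∀ f l, V f l = atom n (t l) 0 f)
    (hdecomp : toep n u = V * Matrix.diagonal (fun j => (d j : ℂ)) * Vᴴ) :
    ∃ c : Fin r → ℂ, X = V.mulVec c ∧ ∑ j, ‖c j‖ = atomicNorm X :=
  atomicNorm_attained_of_vandermonde_general n r X u s hpsd hopt t ht d hd V hV hdecomp
end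

section
/- Let X, Y ∈ ℂ^n with X_j ≠ 0 for every j ∈ {0,...,n−1}. If |Y_j| = |X_j| for all j ∈ {0,...,n−1}, and |Y_j + Y_{j+1}| = |X_j + X_{j+1}| and |Y_j − i Y_{j+1}| = |X_j − i X_{j+1}| for all j ∈ {0,...,n−2}, then there exists θ ∈ ℝ such that Y_j = e^{iθ} X_j for all j, i.e., Y equals X up to a global phase. -/
/-!
By polarization, `|a|`, `|b|`, `|a + b|` and `|a - i b|` determine `a * conj b`, so the data fix
every product `X_j * conj X_{j+1}`. Put `c = Y_0 / X_0`, a unimodular number. If `Y_j = c X_j`,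
then `c X_j * conj Y_{j+1} = X_j * conj X_{j+1}`, and cancelling `X_j ≠ 0` gives
`Y_{j+1} = c X_{j+1}`; induction along the chain yields `Y = c X` with `c = exp (θ i)`.
-/

open Complex ComplexConjugate

theorem re_mul_conj_eq_polarization (a b : ℂ) :
    (a * conj b).re = (‖a + b‖ ^ 2 - ‖a‖ ^ 2 - ‖b‖ ^ 2) / 2 := by
  simp only [Complex.sq_norm, normSq_add]
  ring

theorem im_mul_conj_eq_polarization (a b : ℂ) :
    (a * conj b).im = (‖a‖ ^ 2 + ‖b‖ ^ 2 - ‖a - I * b‖ ^ 2) / 2 := by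
  simp only [Complex.sq_norm, normSq_sub, normSq_I, map_mul, conj_I]
  simp only [mul_neg, neg_mul, neg_re, mul_re, mul_im, I_re, I_im, conj_re, conj_im]
  ring

theorem mul_conj_eq_of_norm_eq {a b a' b' : ℂ} (ha : ‖a‖ = ‖a'‖) (hb : ‖b‖ = ‖b'‖)
    (hab : ‖a + b‖ = ‖a' + b'‖) (habI : ‖a - I * b‖ = ‖a' - I * b'‖) :
    a * conj b = a' * conj b' :=
  Complex.ext (by rw [re_mul_conj_eq_polarization, re_mul_conj_eq_polarization, ha, hb, hab])
    (by rw [im_mul_conj_eq_polarization, im_mul_conj_eq_polarization, ha, hb, habI])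

theorem eq_mul_of_mul_conj_eq {c a b b' : ℂ} (hc : ‖c‖ = 1) (ha : a ≠ 0)
    (h : c * a * conj b' = a * conj b) : b' = c * b := by
  have hcc : conj c * c = 1 := by
    rw [← normSq_eq_conj_mul_self, ← Complex.sq_norm, hc]; norm_num
  apply (starRingEnd ℂ).injective
  apply mul_left_cancel₀ ha
  rw [map_mul]
  linear_combination conj c * h - a * conj b' * hcc

/-- A vector with nonvanishing entries is determined up to global phase by the magnitudes
`|X_j|`, `|X_j + X_{j+1}|`, and `|X_j − iX_{j+1}|`. -/
theorem recovery_up_to_global_phase (n : ℕ) (X Y : Fin n → ℂ)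
    (hXne : ∀ j, X j ≠ 0)
    (hmag : ∀ j, ‖Y j‖ = ‖X j‖)
    (hmag2 : ∀ (j : ℕ) (hj : j + 1 < n),
      ‖Y ⟨j, Nat.lt_of_succ_lt hj⟩ + Y ⟨j + 1, hj⟩‖ =
        ‖X ⟨j, Nat.lt_of_succ_lt hj⟩ + X ⟨j + 1, hj⟩‖)
    (hmag3 : ∀ (j : ℕ) (hj : j + 1 < n),
      ‖Y ⟨j, Nat.lt_of_succ_lt hj⟩ - Complex.I * Y ⟨j + 1, hj⟩‖ =
        ‖X ⟨j, Nat.lt_of_succ_lt hj⟩ - Complex.I * X ⟨j + 1, hj⟩‖) :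
    ∃ θ : ℝ, ∀ j, Y j = Complex.exp (θ * Complex.I) * X j := by
  rcases Nat.eq_zero_or_pos n with rfl | hn
  · exact ⟨0, fun j => j.elim0⟩
  set c := Y ⟨0, hn⟩ / X ⟨0, hn⟩
  have hc : ‖c‖ = 1 := by
    rw [norm_div, hmag, div_self (norm_ne_zero_iff.mpr (hXne _))]
  have hYX : ∀ (j : ℕ) (hj : j < n), Y ⟨j, hj⟩ = c * X ⟨j, hj⟩ := by
    intro j
    induction j with
    | zero => intro hj; exact (div_mul_cancel₀ _ (hXne _)).symm
    | succ k ih =>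
      intro hj
      have hk : k < n := Nat.lt_of_succ_lt hj
      refine eq_mul_of_mul_conj_eq hc (hXne ⟨k, hk⟩) ?_
      rw [← ih hk]
      exact mul_conj_eq_of_norm_eq (hmag _) (hmag _) (hmag2 k hj) (hmag3 k hj)
  obtain ⟨θ, hθ⟩ := (norm_eq_one_iff c).mp hc
  exact ⟨θ, fun j => hθ ▸ hYX j j.isLt⟩
end

section
/- Let X ∈ ℂ^n with X_j ≠ 0 for every j ∈ {0,...,n−1}, and let Q ∈ ℂ^{n×n} be positive semidefinite. If Q_{j,j} = |X_j|² for all j ∈ {0,...,n−1}, and Q_{j,j+1} = X_j·conj(X_{j+1}) and Q_{j+1,j} = X_{j+1}·conj(X_j) for all j ∈ {0,...,n−2} (i.e., Q agrees with X Xᴴ on its diagonal, superdiagonal, and subdiagonal), then Q = X Xᴴ. -/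
open Matrix Complex ComplexConjugate
open scoped ComplexOrder

/-!
For adjacent indices `a`, `b` the vector `v = conj (X b) • eₐ - conj (X a) • e_b` satisfies
`vᴴ Q v = vᴴ (X Xᴴ) v = 0`, since this quadratic form only sees the entries of `Q` on `{a, b}²`
and `Xᴴ v = 0`. Positive semidefiniteness then forces `Q v = 0`, i.e. in every row `i` the ratio
`Q i k / conj (X k)` is the same for adjacent `k`, hence for all `k`; at `k = i` it equals `X i`.
-/

theorem Fin.apply_eq_apply_of_forall_apply_succ_eq {n : ℕ} {α : Type*} (f : Fin n → α)
    (h : ∀ (j : ℕ) (hj : j + 1 < n), f ⟨j, Nat.lt_of_succ_lt hj⟩ = f ⟨j + 1, hj⟩)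
    (i k : Fin n) : f i = f k := by
  have to_zero : ∀ (j : ℕ) (hj : j < n), f ⟨j, hj⟩ = f ⟨0, by omega⟩ := by
    intro j
    induction j with
    | zero => intro _; rfl
    | succ j ih => intro hj; rw [← h j hj, ih]
  rw [to_zero i i.isLt, to_zero k k.isLt]

section

variable {ι 𝕜 : Type*} [Fintype ι] [DecidableEq ι] [RCLike 𝕜]

theorem Matrix.PosSemidef.mul_conj_eq_of_eq_vecMulVec_on_pair {Q : Matrix ι ι 𝕜}
    (hQ : Q.PosSemidef) {x : ι → 𝕜} {a b : ι}
    (haa : Q a a = x a * conj (x a)) (hab : Q a b = x a * conj (x b))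
    (hba : Q b a = x b * conj (x a)) (hbb : Q b b = x b * conj (x b)) (i : ι) :
    Q i a * conj (x b) = Q i b * conj (x a) := by
  set v : ι → 𝕜 := conj (x b) • Pi.single a 1 - conj (x a) • Pi.single b 1
  have hQv : ∀ k, (Q *ᵥ v) k = Q k a * conj (x b) - Q k b * conj (x a) := by
    intro k
    simp [v, mulVec_sub, mulVec_smul, mul_comm]
  have hv : star v ⬝ᵥ Q *ᵥ v = 0 := by
    simp only [v, star_sub, star_smul, RCLike.star_def, RingHomCompTriple.comp_apply,
      RingHom.id_apply, Pi.star_single, star_one, sub_dotProduct, smul_dotProduct,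
      single_dotProduct, hQv, haa, hab, hba, hbb, one_mul, smul_eq_mul]
    ring
  have hker : Q *ᵥ v = 0 := (hQ.dotProduct_mulVec_zero_iff v).mp hv
  exact sub_eq_zero.mp ((hQv i).symm.trans (congrFun hker i))

end

/-- Lemma 1: a positive semidefinite matrix agreeing with `XXᴴ` on its diagonal,
superdiagonal and subdiagonal, for `X` with nonvanishing entries, equals `XXᴴ`. -/
theorem psd_tridiag_determines_rank_one (n : ℕ) (X : Fin n → ℂ) (hX : ∀ j, X j ≠ 0)
    (Q : Matrix (Fin n) (Fin n) ℂ) (hQ : Q.PosSemidef)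
    (hdiag : ∀ j, Q j j = ((‖X j‖ : ℂ)) ^ 2)
    (hsup : ∀ (j : ℕ) (hj : j + 1 < n),
      Q ⟨j, Nat.lt_of_succ_lt hj⟩ ⟨j + 1, hj⟩ =
        X ⟨j, Nat.lt_of_succ_lt hj⟩ * conj (X ⟨j + 1, hj⟩))
    (hsub : ∀ (j : ℕ) (hj : j + 1 < n),
      Q ⟨j + 1, hj⟩ ⟨j, Nat.lt_of_succ_lt hj⟩ =
        X ⟨j + 1, hj⟩ * conj (X ⟨j, Nat.lt_of_succ_lt hj⟩)) :
    Q = Matrix.vecMulVec X (star X) := by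
  have hdiag' : ∀ j, Q j j = X j * conj (X j) := fun j => by rw [hdiag, mul_conj']
  have hconj : ∀ j, conj (X j) ≠ 0 := fun j => (map_ne_zero _).mpr (hX j)
  have hstep : ∀ i (j : ℕ) (hj : j + 1 < n),
      Q i ⟨j, Nat.lt_of_succ_lt hj⟩ / conj (X ⟨j, Nat.lt_of_succ_lt hj⟩) =
        Q i ⟨j + 1, hj⟩ / conj (X ⟨j + 1, hj⟩) := fun i j hj => by
    rw [div_eq_div_iff (hconj _) (hconj _)]
    exact hQ.mul_conj_eq_of_eq_vecMulVec_on_pair (hdiag' _) (hsup j hj) (hsub j hj) (hdiag' _) i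
  ext i k
  have hrow := Fin.apply_eq_apply_of_forall_apply_succ_eq (fun k => Q i k / conj (X k))
    (hstep i) k i
  rw [hdiag', mul_div_cancel_right₀ _ (hconj i)] at hrow
  rw [vecMulVec_apply, Pi.star_apply, ← hrow, Complex.star_def, div_mul_cancel₀ _ (hconj k)]
end

section
/- Let x_0, x_1, x_2 ∈ ℂ with x_1 ≠ 0, and let Q ∈ ℂ^{3×3} be positive semidefinite with Q_{0,0} = |x_0|², Q_{1,1} = |x_1|², Q_{2,2} = |x_2|², Q_{0,1} = x_0·conj(x_1), Q_{1,0} = x_1·conj(x_0), Q_{1,2} = x_1·conj(x_2), and Q_{2,1} = x_2·conj(x_1). Then Q_{0,2} = x_0·conj(x_2) (and hence Q_{2,0} = x_2·conj(x_0)); in particular Q = x xᴴ where x = (x_0, x_1, x_2). -/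
/-!
If `Q` is positive semidefinite and its principal `{a, b}` block equals that of `x xᴴ`, then the
vector `z = conj (x b) • e_a - conj (x a) • e_b` satisfies `zᴴ Q z = 0`, hence `Q z = 0`. Reading
off row `k` gives `Q k a * conj (x b) = Q k b * conj (x a)`, so when `x b ≠ 0` the entry `Q k a` is
determined by `Q k b`. Applied to the blocks `{0, 1}` and `{2, 1}` this forces both corners.
-/

open Matrix Complex ComplexConjugate
open scoped ComplexOrder

namespace Matrix.PosSemidef

variable {n 𝕜 : Type*} [Fintype n] [DecidableEq n] [RCLike 𝕜] {Q : Matrix n n 𝕜}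
  {x : n → 𝕜} {a b : n}

theorem mul_conj_eq_of_principal_eq_vecMulVec (hQ : Q.PosSemidef)
    (haa : Q a a = x a * conj (x a)) (hab : Q a b = x a * conj (x b))
    (hba : Q b a = x b * conj (x a)) (hbb : Q b b = x b * conj (x b)) (k : n) :
    Q k a * conj (x b) = Q k b * conj (x a) := by
  set z : n → 𝕜 := Pi.single a (conj (x b)) - Pi.single b (conj (x a))
  have hQz : ∀ i, (Q *ᵥ z) i = Q i a * conj (x b) - Q i b * conj (x a) := fun i => by
    simp [z, mulVec_sub, mul_comm]
  have hker : Q *ᵥ z = 0 := by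
    refine (hQ.dotProduct_mulVec_zero_iff z).mp ?_
    have hform : star z ⬝ᵥ Q *ᵥ z = x b * (Q *ᵥ z) a - x a * (Q *ᵥ z) b := by
      simp [z, sub_dotProduct]
    rw [hform, hQz, hQz, haa, hab, hba, hbb]
    ring
  simpa [sub_eq_zero] using (hQz k).symm.trans (congrFun hker k)

theorem apply_eq_of_principal_eq_vecMulVec (hQ : Q.PosSemidef)
    (haa : Q a a = x a * conj (x a)) (hab : Q a b = x a * conj (x b))
    (hba : Q b a = x b * conj (x a)) (hbb : Q b b = x b * conj (x b)) (hb : x b ≠ 0) {k : n}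
    (hkb : Q k b = x k * conj (x b)) :
    Q k a = x k * conj (x a) := by
  refine mul_right_cancel₀ ((map_ne_zero (starRingEnd 𝕜)).mpr hb) ?_
  rw [hQ.mul_conj_eq_of_principal_eq_vecMulVec haa hab hba hbb k, hkb]
  ring

end Matrix.PosSemidef

/-- Base case of Lemma 1: for a `3×3` positive semidefinite matrix agreeing with `xxᴴ` on its
diagonal, superdiagonal, and subdiagonal, with `x_1 ≠ 0`, the remaining corner entries are
forced and `Q = xxᴴ`. -/
theorem psd_three_by_three_corner (x : Fin 3 → ℂ) (hx1 : x 1 ≠ 0)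
    (Q : Matrix (Fin 3) (Fin 3) ℂ) (hQ : Q.PosSemidef)
    (h00 : Q 0 0 = ((‖x 0‖ : ℂ)) ^ 2)
    (h11 : Q 1 1 = ((‖x 1‖ : ℂ)) ^ 2)
    (h22 : Q 2 2 = ((‖x 2‖ : ℂ)) ^ 2)
    (h01 : Q 0 1 = x 0 * conj (x 1)) (h10 : Q 1 0 = x 1 * conj (x 0))
    (h12 : Q 1 2 = x 1 * conj (x 2)) (h21 : Q 2 1 = x 2 * conj (x 1)) :
    Q 0 2 = x 0 * conj (x 2) ∧ Q 2 0 = x 2 * conj (x 0) ∧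
      Q = Matrix.vecMulVec x (star x) := by
  simp only [← Complex.mul_conj'] at h00 h11 h22
  have h02 : Q 0 2 = x 0 * conj (x 2) :=
    hQ.apply_eq_of_principal_eq_vecMulVec h22 h21 h12 h11 hx1 h01
  have h20 : Q 2 0 = x 2 * conj (x 0) :=
    hQ.apply_eq_of_principal_eq_vecMulVec h00 h01 h10 h11 hx1 h21
  refine ⟨h02, h20, ?_⟩
  ext i j
  fin_cases i <;> fin_cases j <;>
    simp [vecMulVec_apply, h00, h01, h02, h10, h11, h12, h20, h21, h22]
end

section
/- Let V ∈ ℂ^{n×r} have full column rank r (equivalently, Vᴴ has full row rank), let D ∈ ℝ^{r×r} be diagonal with nonnegative diagonal entries, let w ∈ ℂ^r, and let s > 0. If the matrix V D Vᴴ − (1/s)·V w wᴴ Vᴴ is positive semidefinite, then s·Tr(D) ≥ (Σ_{j=1}^r |w_j|)². -/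
open Matrix Complex BigOperators
open scoped ComplexOrder

/-!
Since `V` is injective, `Vᴴ` is surjective, so some `q` has `Vᴴ q = c`, where `c` is the sign
vector of `w`. The quadratic form of `V (D - s⁻¹ w wᴴ) Vᴴ` at `q` is that of `D - s⁻¹ w wᴴ` at `c`,
namely `Tr D - s⁻¹ |cᴴ w|² = Tr D - s⁻¹ (∑ j, |w j|)²`, and it is nonnegative.
-/

namespace Matrix

variable {m n K : Type*} [Fintype m] [Fintype n]

theorem conjTranspose_mulVec_surjective [Field K] [PartialOrder K] [StarRing K]
    [StarOrderedRing K] [DecidableEq n] {V : Matrix m n K} (hV : Function.Injective V.mulVec) :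
    Function.Surjective Vᴴ.mulVec := by
  have hGram : IsUnit (Vᴴ * V) := by
    rw [← mulVec_injective_iff_isUnit]
    intro x y hxy
    have hsub : (Vᴴ * V) *ᵥ (x - y) = 0 := by rw [mulVec_sub, hxy, sub_self]
    rw [conjTranspose_mul_self_mulVec_eq_zero, ← mulVec_zero V] at hsub
    exact sub_eq_zero.mp (hV hsub)
  intro c
  obtain ⟨p, hp⟩ := mulVec_surjective_iff_isUnit.mpr hGram c
  exact ⟨V *ᵥ p, by rwa [mulVec_mulVec]⟩

theorem star_dotProduct_mul_mul_conjTranspose_mulVec [CommRing K] [StarRing K]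
    (V : Matrix m n K) (M : Matrix n n K) (x : m → K) :
    star x ⬝ᵥ ((V * M * Vᴴ) *ᵥ x) = star (Vᴴ *ᵥ x) ⬝ᵥ (M *ᵥ (Vᴴ *ᵥ x)) := by
  simp only [star_mulVec, conjTranspose_conjTranspose, dotProduct_mulVec, vecMul_vecMul,
    Matrix.mul_assoc]

theorem PosSemidef.dotProduct_mulVec_nonneg_of_mul_mul_conjTranspose [CommRing K]
    [PartialOrder K] [StarRing K] {V : Matrix m n K} {M : Matrix n n K}
    (hpsd : (V * M * Vᴴ).PosSemidef) (hV : Function.Surjective Vᴴ.mulVec) (x : n → K) :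
    0 ≤ star x ⬝ᵥ (M *ᵥ x) := by
  obtain ⟨q, rfl⟩ := hV x
  rw [← star_dotProduct_mul_mul_conjTranspose_mulVec]
  exact hpsd.dotProduct_mulVec_nonneg q

theorem star_dotProduct_vecMulVec_mulVec [CommRing K] [StarRing K] (w c : n → K) :
    star c ⬝ᵥ (vecMulVec w (star w) *ᵥ c) = (star c ⬝ᵥ w) * star (star c ⬝ᵥ w) := by
  rw [vecMulVec_mulVec, op_smul_eq_smul, dotProduct_smul, smul_eq_mul, mul_comm,
    star_dotProduct (v := w) (w := c)]

theorem star_dotProduct_diagonal_mulVec_of_norm_eq_one [DecidableEq n] (d : n → ℝ)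
    {c : n → ℂ} (hc : ∀ j, ‖c j‖ = 1) :
    star c ⬝ᵥ (diagonal (fun j => (d j : ℂ)) *ᵥ c) = ∑ j, d j := by
  simp only [mulVec_diagonal, dotProduct, Pi.star_apply, RCLike.star_def, ofReal_sum]
  refine Finset.sum_congr rfl fun j _ => ?_
  rw [mul_left_comm, ← normSq_eq_conj_mul_self, normSq_eq_norm_sq, hc j]
  simp

end Matrix

namespace Complex

/-- `z / ‖z‖` for `z ≠ 0`; `phase 0 = 1` because `arg 0 = 0`. -/
noncomputable def phase (z : ℂ) : ℂ := exp (arg z * I)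

theorem norm_phase (z : ℂ) : ‖phase z‖ = 1 := norm_exp_ofReal_mul_I _

theorem star_phase_mul_self (z : ℂ) : star (phase z) * z = ‖z‖ := by
  calc star (phase z) * z = star (phase z) * (‖z‖ * phase z) := by
        rw [phase, norm_mul_exp_arg_mul_I]
    _ = ‖z‖ * normSq (phase z) := by rw [normSq_eq_conj_mul_self, ← RCLike.star_def]; ring
    _ = ‖z‖ := by rw [normSq_eq_norm_sq, norm_phase]; simp

theorem star_phase_dotProduct {n : Type*} [Fintype n] (w : n → ℂ) :
    star (fun j => phase (w j)) ⬝ᵥ w = ∑ j, ‖w j‖ := by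
  simp only [dotProduct, Pi.star_apply, star_phase_mul_self, ofReal_sum]

end Complex

theorem trace_lower_bound_of_psd_general (n r : ℕ) (V : Matrix (Fin n) (Fin r) ℂ)
    (hV : Function.Injective V.mulVec)
    (d : Fin r → ℝ) (w : Fin r → ℂ) (s : ℝ) (hs : 0 < s)
    (hpsd : (V * Matrix.diagonal (fun j => (d j : ℂ)) * Vᴴ -
        ((1 / s : ℝ) : ℂ) • (V * Matrix.vecMulVec w (star w) * Vᴴ)).PosSemidef) :
    s * ∑ j, d j ≥ (∑ j, ‖w j‖) ^ 2 := by
  rw [← Matrix.smul_mul, ← Matrix.mul_smul, ← Matrix.sub_mul, ← Matrix.mul_sub] at hpsd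
  have hquad := hpsd.dotProduct_mulVec_nonneg_of_mul_mul_conjTranspose
    (conjTranspose_mulVec_surjective hV) fun j => phase (w j)
  rw [sub_mulVec, dotProduct_sub, smul_mulVec, dotProduct_smul,
    star_dotProduct_diagonal_mulVec_of_norm_eq_one d fun j => norm_phase (w j),
    star_dotProduct_vecMulVec_mulVec, star_phase_dotProduct, smul_eq_mul, RCLike.star_def,
    conj_ofReal, ← ofReal_mul, ← ofReal_mul, ← ofReal_sub, zero_le_real] at hquad
  rw [ge_iff_le, ← sub_nonneg]
  calc 0 ≤ s * (∑ j, d j - 1 / s * ((∑ j, ‖w j‖) * ∑ j, ‖w j‖)) := mul_nonneg hs.le hquad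
    _ = s * ∑ j, d j - (∑ j, ‖w j‖) ^ 2 := by field_simp

/-- If `V` has full column rank, `D ⪰ 0` is diagonal, `s > 0`, and
`V D Vᴴ − (1/s)·V wwᴴ Vᴴ ⪰ 0`, then `s·Tr(D) ≥ (Σ_j |w_j|)²`. -/
theorem trace_lower_bound_of_psd (n r : ℕ) (V : Matrix (Fin n) (Fin r) ℂ)
    (hV : Function.Injective V.mulVec)
    (d : Fin r → ℝ) (hd : ∀ j, 0 ≤ d j) (w : Fin r → ℂ) (s : ℝ) (hs : 0 < s)
    (hpsd : (V * Matrix.diagonal (fun j => (d j : ℂ)) * Vᴴ -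
        ((1 / s : ℝ) : ℂ) • (V * Matrix.vecMulVec w (star w) * Vᴴ)).PosSemidef) :
    s * ∑ j, d j ≥ (∑ j, ‖w j‖) ^ 2 :=
  trace_lower_bound_of_psd_general n r V hV d w s hs hpsd
end
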